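/- Let g(t) = (6/π²) for 0 < t ≤ 1, and g(t) = (6/π²)·(1/t + 2(1 − 1/t)² log(1 − 1/t) − (1/2)(1 − 2/t)² log|1 − 2/t|) for t > 1. Then for t ≥ 2, g(t) = (24/(π² t²)) · ∑_{n=1}^∞ (2ⁿ − 1)/(n(n+1)(n+2) tⁿ). -/

import Mathlib

/-!
Write `P n = (n+1)(n+2)(n+3)`. By partial fractions, `2 / P n = 1/(n+1) - 2/(n+2) + 1/(n+3)`,
so shifting the logarithmic series `∑ yⁿ⁺¹/(n+1) = -log (1 - y)` gives
`∑ yⁿ⁺³ / P n = -(1/2)(1 - y)² log (1 - y) + (3/4) y² - y/2` for `|y| < 1`; at `y = 1` the series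
telescopes to `1/4`, which is the same formula read with `log 0 = 0`.
The `n`-th term of the claimed series is `(t²/4) (2/t)ⁿ⁺³ / P n - t² (1/t)ⁿ⁺³ / P n`,
so evaluating the formula at `y = 2/t` and `y = 1/t` yields `g t`.
-/

open Real Filter Topology Finset

/-- The limiting density of the geometric free path length. -/
noncomputable def lorentzDensity (t : ℝ) : ℝ :=
  if t ≤ 1 then 6 / Real.pi ^ 2
  else 6 / Real.pi ^ 2 *
    (1 / t + 2 * (1 - 1 / t) ^ 2 * Real.log (1 - 1 / t)
      - 1 / 2 * (1 - 2 / t) ^ 2 * Real.log |1 - 2 / t|)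

lemma hasSum_pow_div_consecutive_prod_of_abs_lt_one {y : ℝ} (hy : |y| < 1) :
    HasSum (fun n : ℕ => y ^ (n + 3) / (((n : ℝ) + 1) * ((n : ℝ) + 2) * ((n : ℝ) + 3)))
      (-(1 / 2) * (1 - y) ^ 2 * log (1 - y) + 3 / 4 * y ^ 2 - y / 2) := by
  have S := hasSum_pow_div_log_of_abs_lt_one hy
  have S1 := (hasSum_nat_add_iff' 1).mpr S
  have S2 := (hasSum_nat_add_iff' 2).mpr S
  have h : HasSum (fun n : ℕ => _) (_ : ℝ) :=
    (((S.mul_left (y ^ 2)).sub (S1.mul_left (2 * y))).add S2).div_const 2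
  convert h using 1
  · funext n
    push_cast
    field_simp
    ring
  · simp only [sum_range_succ, sum_range_zero]
    norm_num
    ring

lemma hasSum_one_div_consecutive_prod :
    HasSum (fun n : ℕ => 1 / (((n : ℝ) + 1) * ((n : ℝ) + 2) * ((n : ℝ) + 3))) (1 / 4) := by
  rw [hasSum_iff_tendsto_nat_of_nonneg (fun n => by positivity)]
  set f : ℕ → ℝ := fun n => 1 / (2 * ((n : ℝ) + 1) * ((n : ℝ) + 2))
  have telescope (N : ℕ) :
      ∑ n ∈ range N, 1 / (((n : ℝ) + 1) * ((n : ℝ) + 2) * ((n : ℝ) + 3)) = f 0 - f N := by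
    rw [← sum_range_sub']
    refine sum_congr rfl fun n _ => ?_
    simp only [f]
    push_cast
    field_simp
    ring
  have hf : Tendsto f atTop (𝓝 0) := by
    have h := tendsto_one_div_add_atTop_nhds_zero_nat (𝕜 := ℝ)
    convert (h.mul ((tendsto_add_atTop_iff_nat 1).mpr h)).div_const 2 using 1
    · funext n
      simp only [f]
      push_cast
      field_simp
      ring
    · simp
  simp only [telescope]
  convert (tendsto_const_nhds (x := f 0)).sub hf using 2
  norm_num [f]

lemma hasSum_pow_div_consecutive_prod {y : ℝ} (h₁ : -1 < y) (h₂ : y ≤ 1) :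
    HasSum (fun n : ℕ => y ^ (n + 3) / (((n : ℝ) + 1) * ((n : ℝ) + 2) * ((n : ℝ) + 3)))
      (-(1 / 2) * (1 - y) ^ 2 * log (1 - y) + 3 / 4 * y ^ 2 - y / 2) := by
  rcases h₂.lt_or_eq with hlt | rfl
  · exact hasSum_pow_div_consecutive_prod_of_abs_lt_one (abs_lt.mpr ⟨h₁, hlt⟩)
  · simp only [one_pow]
    convert hasSum_one_div_consecutive_prod using 1
    norm_num

lemma two_pow_sub_one_div_eq {t : ℝ} (ht : t ≠ 0) (n : ℕ) :
    ((2 : ℝ) ^ (n + 1) - 1) / (((n : ℝ) + 1) * ((n : ℝ) + 2) * ((n : ℝ) + 3) * t ^ (n + 1)) =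
      t ^ 2 / 4 * ((2 / t) ^ (n + 3) / (((n : ℝ) + 1) * ((n : ℝ) + 2) * ((n : ℝ) + 3)))
        - t ^ 2 * ((1 / t) ^ (n + 3) / (((n : ℝ) + 1) * ((n : ℝ) + 2) * ((n : ℝ) + 3))) := by
  rw [div_pow, div_pow, one_pow]
  field_simp
  ring

/-- For `t ≥ 2`, `g(t) = (24/(π² t²)) ∑_{n=1}^∞ (2ⁿ − 1)/(n(n+1)(n+2) tⁿ)`. -/
theorem lorentzDensity_series (t : ℝ) (ht : 2 ≤ t) :
    lorentzDensity t = 24 / (Real.pi ^ 2 * t ^ 2) *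
      ∑' n : ℕ, ((2 : ℝ) ^ (n + 1) - 1) /
        (((n : ℝ) + 1) * ((n : ℝ) + 2) * ((n : ℝ) + 3) * t ^ (n + 1)) := by
  have ht₀ : 0 < t := by linarith
  have h₁ : |1 / t| < 1 := by rw [abs_of_pos (by positivity), div_lt_one ht₀]; linarith
  have h₂ : -1 < 2 / t := by linarith [show 0 < 2 / t by positivity]
  have h₃ : 2 / t ≤ 1 := (div_le_one ht₀).mpr ht
  have hsum := ((hasSum_pow_div_consecutive_prod h₂ h₃).mul_left (t ^ 2 / 4)).sub
    ((hasSum_pow_div_consecutive_prod_of_abs_lt_one h₁).mul_left (t ^ 2))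
  rw [← funext (two_pow_sub_one_div_eq ht₀.ne')] at hsum
  rw [hsum.tsum_eq, lorentzDensity, if_neg (by linarith), abs_of_nonneg (by linarith)]
  field_simp
  ring
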